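/- arXiv:2401.06680 — 2 statements merged into one kernel-verified Lean document; each statement's English description precedes it below -/
import Mathlib

section
/- Let M^n(P, λ) be a small cover over the product of simplices P = Δ^{n_1} × ⋯ × Δ^{n_m}, with mod-2 cohomology ring H*(M^n(P,λ); Z_2) ≅ Z_2[y_1,…,y_m]/I where I = ⟨Γ_1,…,Γ_m⟩ and Γ_j = y_j · ∏_{k=1}^{n_j} (y_j + Σ_{ℓ=1}^{j−1} β^j_{ℓk} y_ℓ) for coefficients β^j_{ℓk} ∈ Z_2 coming from the associated unipotent lower-triangular Bott matrix. Then for each j ∈ {1,…,m}, y_j^{n_j} ≠ 0 in this quotient ring; moreover the product y_1^{n_1} y_2^{n_2} ⋯ y_m^{n_m} ≠ 0. -/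
open Set unitInterval
open scoped TensorProduct

noncomputable section

/-! ### Basic homotopy invariants -/

/-- The inclusion of a subset as a continuous map. -/
def subIncl {X : Type*} [TopologicalSpace X] (A : Set X) : C(A, X) :=
  ⟨fun a => a.1, continuous_subtype_val⟩

/-- The Lusternik–Schnirelmann category of a space `X`: the least `r` such that `X`
admits an open cover by `r` sets, each of whose inclusions into `X` is null-homotopic. -/
def LSCat (X : Type*) [TopologicalSpace X] : ℕ :=
  sInf {r : ℕ | ∃ U : Fin r → Set X, (∀ i, IsOpen (U i)) ∧ (⋃ i, U i) = Set.univ ∧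
    ∀ i, ∃ x₀ : X, (subIncl (U i)).Homotopic (ContinuousMap.const _ x₀)}

/-- Farber's topological complexity of `X`: the least `k` such that `X × X` admits an
open cover by `k` sets, on each of which the free path fibration
`γ ↦ (γ 0, γ 1)` admits a continuous section. -/
def FarberTC (X : Type*) [TopologicalSpace X] : ℕ :=
  sInf {k : ℕ | ∃ U : Fin k → Set (X × X), (∀ i, IsOpen (U i)) ∧ (⋃ i, U i) = Set.univ ∧
    ∀ i, ∃ s : C(U i, C(unitInterval, X)),
      ∀ p : U i, s p 0 = (p : X × X).1 ∧ s p 1 = (p : X × X).2}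

/-- The equivariant Lusternik–Schnirelmann category for the `ℤ/2`-action generated by an
involution `τ` on `X`: the least `r` such that `X` is covered by `r` `τ`-invariant open
sets, each of which can be `τ`-equivariantly deformed inside `X` into a single orbit. -/
def EquivCatInvol {X : Type*} [TopologicalSpace X] (τ : X → X) : ℕ :=
  sInf {r : ℕ | ∃ U : Fin r → Set X, (∀ i, IsOpen (U i)) ∧ (⋃ i, U i) = Set.univ ∧
    (∀ i, τ '' U i = U i) ∧
    ∀ i, ∃ H : C(↥(U i) × unitInterval, X),
      (∀ u : U i, H (u, 0) = (u : X)) ∧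
      (∀ (u : X) (hu : u ∈ U i) (hτu : τ u ∈ U i) (t : unitInterval),
        H (⟨τ u, hτu⟩, t) = τ (H (⟨u, hu⟩, t))) ∧
      ∃ x₀ : X, ∀ u : U i, H (u, 1) = x₀ ∨ H (u, 1) = τ x₀}

/-- The equivariant topological complexity for the `ℤ/2`-action generated by an involution
`τ` on `X`: the equivariant sectional category of the free path fibration with respect to
the diagonal actions. -/
def EquivTCInvol {X : Type*} [TopologicalSpace X] (τ : X → X) : ℕ :=
  sInf {k : ℕ | ∃ U : Fin k → Set (X × X), (∀ i, IsOpen (U i)) ∧ (⋃ i, U i) = Set.univ ∧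
    (∀ i, (fun p : X × X => (τ p.1, τ p.2)) '' U i = U i) ∧
    ∀ i, ∃ s : C(U i, C(unitInterval, X)),
      (∀ p : U i, s p 0 = (p : X × X).1 ∧ s p 1 = (p : X × X).2) ∧
      (∀ (p : X × X) (hp : p ∈ U i) (hq : (τ p.1, τ p.2) ∈ U i) (t : unitInterval),
        s ⟨(τ p.1, τ p.2), hq⟩ t = τ (s ⟨p, hp⟩ t))}

/-- The ordered configuration space of two distinct points of `X`. -/
abbrev ConfTwo (X : Type*) [TopologicalSpace X] := {p : X × X // p.1 ≠ p.2}

/-- The symmetric topological complexity of Farber–Grant: `TC^S(X) = 1 + secat(π'')`,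
where `π'' : P'X/ℤ₂ → B(X;2)` is induced by the free path fibration restricted to paths
with distinct endpoints.  Sections of `π''` over open sets of `B(X;2)` correspond to
`ℤ/2`-equivariant sections of `π' : P'X → F(X;2)` over symmetric (swap-invariant) open
sets of the ordered configuration space, which is how we phrase it. -/
def TCSymm (X : Type*) [TopologicalSpace X] : ℕ :=
  1 + sInf {k : ℕ | ∃ U : Fin k → Set (ConfTwo X),
    (∀ i, IsOpen (U i)) ∧ (⋃ i, U i) = Set.univ ∧
    (∀ i, ∀ p : ConfTwo X, p ∈ U i →
      (⟨(p.1.2, p.1.1), Ne.symm p.2⟩ : ConfTwo X) ∈ U i) ∧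
    ∀ i, ∃ s : C(U i, C(unitInterval, X)),
      (∀ p : U i, (s p 0 = (p : ConfTwo X).1.1 ∧ s p 1 = (p : ConfTwo X).1.2) ∧
        s p 0 ≠ s p 1) ∧
      (∀ (p : ConfTwo X) (hp : p ∈ U i)
        (hq : (⟨(p.1.2, p.1.1), Ne.symm p.2⟩ : ConfTwo X) ∈ U i) (t : unitInterval),
        s ⟨⟨(p.1.2, p.1.1), Ne.symm p.2⟩, hq⟩ t = s ⟨p, hp⟩ (unitInterval.symm t))}

/-! ### Cup-length and zero-divisors-cup-length -/

/-- The zero-divisors-cup-length of a commutative `ℤ/2`-algebra `A`: the largest `k`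
for which there are `k` elements of the kernel of the multiplication map
`A ⊗ A → A` whose product is nonzero. -/
def zclRing (A : Type*) [CommRing A] [Algebra (ZMod 2) A] : ℕ :=
  sSup {k : ℕ | ∃ u : Fin k → (A ⊗[ZMod 2] A),
    (∀ i, LinearMap.mul' (ZMod 2) A (u i) = 0) ∧ ∏ i, u i ≠ 0}

/-- The cup-length of a commutative ring relative to an ideal `J` (of "positive degree"
elements): the largest `k` for which some `k` elements of `J` have nonzero product. -/
def clIdeal {A : Type*} [CommRing A] (J : Ideal A) : ℕ :=
  sSup {k : ℕ | ∃ u : Fin k → A, (∀ i, u i ∈ J) ∧ ∏ i, u i ≠ 0}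

/-- The mod 2 cohomology ring of real projective `n`-space, `ℤ₂[x]/(x^{n+1})`. -/
abbrev RPCohomology (n : ℕ) :=
  Polynomial (ZMod 2) ⧸ Ideal.span ({(Polynomial.X : Polynomial (ZMod 2)) ^ (n + 1)} : Set (Polynomial (ZMod 2)))

/-- The zero-divisors-cup-length of `ℝP^n` with `ℤ/2`-coefficients. -/
def zclRP (n : ℕ) : ℕ := zclRing (RPCohomology n)

/-! ### Characteristic pairs and real torus manifolds -/

/-- A `ℤ/2`-characteristic pair `(P, λ)`: the orbit space `P` (a compact connected nice
manifold with corners, recorded here through its topology and its facet structure)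
together with a characteristic function `λ` on the facets satisfying the
Davis–Januszkiewicz nondegeneracy condition. -/
structure CharPair (n : ℕ) where
  P : Type
  [instTop : TopologicalSpace P]
  [instT2 : T2Space P]
  [instCompact : CompactSpace P]
  [instConn : ConnectedSpace P]
  facets : Set (Set P)
  facetsFinite : facets.Finite
  facetsClosed : ∀ F ∈ facets, IsClosed F
  facetsNonempty : facets.Nonempty
  facetNe : ∀ F ∈ facets, F.Nonempty
  lambda : Set P → Fin n → ZMod 2
  nondeg : ∀ p : P, LinearIndependent (ZMod 2)
    (fun F : {F : Set P // F ∈ facets ∧ p ∈ F} => lambda F.1)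
  spanning : Submodule.span (ZMod 2) (lambda '' facets) = ⊤

attribute [instance] CharPair.instTop CharPair.instT2 CharPair.instCompact CharPair.instConn

variable {n : ℕ}

/-- The identification relation of the Davis–Januszkiewicz construction on `P × ℤ₂ⁿ` :
`(p,g) ∼ (q,h)` iff `p = q` and `g - h` lies in the span of the characteristic vectors
of the facets containing `p`. -/
def CharPair.rel (c : CharPair n) (a b : c.P × (Fin n → ZMod 2)) : Prop :=
  a.1 = b.1 ∧ a.2 - b.2 ∈ Submodule.span (ZMod 2) (c.lambda '' {F ∈ c.facets | a.1 ∈ F})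

/-- The real torus manifold `M(P,λ) = (P × ℤ₂ⁿ)/∼` associated with a characteristic
pair (every real torus manifold arises this way, up to equivariant homeomorphism). -/
def CharPair.Space (c : CharPair n) : Type := Quot c.rel

instance (c : CharPair n) : TopologicalSpace c.Space := by
  unfold CharPair.Space; infer_instance

/-- The action of `g ∈ ℤ₂ⁿ` on `M(P,λ)`. -/
def CharPair.act (c : CharPair n) (g : Fin n → ZMod 2) : c.Space → c.Space :=
  Quot.map (fun a => (a.1, g + a.2)) (by
    rintro ⟨p, h⟩ ⟨q, h'⟩ ⟨hpq, hmem⟩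
    refine ⟨hpq, ?_⟩
    simpa [add_sub_add_left_eq_sub] using hmem)

/-- The characteristic submanifold `q⁻¹(F) ⊆ M(P,λ)` corresponding to a facet `F`. -/
def CharPair.charSub (c : CharPair n) (F : Set c.P) : Set c.Space :=
  {y | ∃ p ∈ F, ∃ g, y = Quot.mk c.rel (p, g)}

/-- `P` is retractable in the sense of Sarkar (Definition 3.2); modeled here by the
requirement that `P` deformation retracts to a point. -/
def CharPair.Retractable (c : CharPair n) : Prop :=
  ∃ (v : c.P) (H : C(c.P × unitInterval, c.P)), (∀ p, H (p, 0) = p) ∧ ∀ p, H (p, 1) = v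

/-! ### Simple polytopes -/

/-- `F` is a facet of the convex body `Q`: a maximal proper nonempty exposed face. -/
def IsPolytopeFacet {n : ℕ} (Q F : Set (EuclideanSpace ℝ (Fin n))) : Prop :=
  IsExposed ℝ Q F ∧ F ≠ Q ∧ F.Nonempty ∧
    ∀ G, IsExposed ℝ Q G → F ⊆ G → G ≠ Q → G = F

/-- `Q ⊆ ℝⁿ` is an `n`-dimensional simple polytope: the convex hull of finitely many
points, full-dimensional, in which every vertex lies on exactly `n` facets. -/
def IsSimplePolytope (n : ℕ) (Q : Set (EuclideanSpace ℝ (Fin n))) : Prop :=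
  (∃ S : Finset (EuclideanSpace ℝ (Fin n)), Q = convexHull ℝ (S : Set (EuclideanSpace ℝ (Fin n)))) ∧
  (interior Q).Nonempty ∧
  ∀ v ∈ Q.extremePoints ℝ, {F | IsPolytopeFacet Q F ∧ v ∈ F}.ncard = n

/-- The characteristic pair is that of a small cover: the orbit space is an
`n`-dimensional simple polytope. -/
def CharPair.IsSmallCover (c : CharPair n) : Prop :=
  ∃ Q : Set (EuclideanSpace ℝ (Fin n)), IsSimplePolytope n Q ∧ Nonempty (c.P ≃ₜ ↥Q)

/-! ### Small covers over products of simplices (generalized real Bott manifolds) -/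

/-- The product of simplices `Δ^{n(0)} × ⋯ × Δ^{n(m-1)}`. -/
abbrev ProdSimplex (m : ℕ) (nd : Fin m → ℕ) :=
  Π j : Fin m, ↥(stdSimplex ℝ (Fin (nd j + 1)))

/-- A characteristic function on the product of simplices `Δ^{n(0)} × ⋯ × Δ^{n(m-1)}`,
whose facets are indexed by pairs `(j, r)` (the `r`-th facet of the `j`-th simplex is
where the `r`-th barycentric coordinate vanishes). -/
structure ProdSimplexCharFun (m : ℕ) (nd : Fin m → ℕ) where
  lambda : (Σ j : Fin m, Fin (nd j + 1)) → (Fin (∑ j, nd j) → ZMod 2)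
  nondeg : ∀ x : ProdSimplex m nd,
    LinearIndependent (ZMod 2)
      (fun F : {F : Σ j : Fin m, Fin (nd j + 1) // ((x F.1 : Fin (nd F.1 + 1) → ℝ) F.2 = 0)} =>
        lambda F.1)

/-- The small cover (generalized real Bott manifold) over a product of simplices
determined by the characteristic function `c`. -/
def ProdSimplexCharFun.Space {m : ℕ} {nd : Fin m → ℕ} (c : ProdSimplexCharFun m nd) : Type :=
  Quot (fun a b : ProdSimplex m nd × (Fin (∑ j, nd j) → ZMod 2) =>
    a.1 = b.1 ∧ a.2 - b.2 ∈ Submodule.span (ZMod 2)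
      {v | ∃ F : Σ j : Fin m, Fin (nd j + 1),
        ((a.1 F.1 : Fin (nd F.1 + 1) → ℝ) F.2 = 0) ∧ v = c.lambda F})

instance {m : ℕ} {nd : Fin m → ℕ} (c : ProdSimplexCharFun m nd) : TopologicalSpace c.Space := by
  unfold ProdSimplexCharFun.Space; infer_instance

/-! ### The cohomology ring presentation of generalized real Bott manifolds -/

/-- The generator `Γ_j = y_j ∏_{k=1}^{n_j} (y_j + Σ_{ℓ<j} β^j_{ℓk} y_ℓ)` of the ideal in
the mod 2 cohomology of a generalized real Bott manifold. -/
def BottGamma (m : ℕ) (nd : Fin m → ℕ) (β : Fin m → Fin m → ℕ → ZMod 2) (j : Fin m) :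
    MvPolynomial (Fin m) (ZMod 2) :=
  MvPolynomial.X j * ∏ k ∈ Finset.range (nd j),
    (MvPolynomial.X j +
      ∑ ℓ ∈ Finset.univ.filter (fun ℓ : Fin m => ℓ < j),
        MvPolynomial.C (β j ℓ k) * MvPolynomial.X ℓ)

/-- The mod 2 cohomology ring `ℤ₂[y_1,…,y_m]/⟨Γ_1,…,Γ_m⟩` of a generalized real Bott
manifold presented by the Bott matrix data `β`. -/
abbrev BottRing (m : ℕ) (nd : Fin m → ℕ) (β : Fin m → Fin m → ℕ → ZMod 2) :=
  MvPolynomial (Fin m) (ZMod 2) ⧸ Ideal.span (Set.range (BottGamma m nd β))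

/-- The class `y_j` in the Bott ring. -/
def BottY (m : ℕ) (nd : Fin m → ℕ) (β : Fin m → Fin m → ℕ → ZMod 2) (j : Fin m) :
    BottRing m nd β :=
  Ideal.Quotient.mk _ (MvPolynomial.X j)

/-! ### The Davis–Januszkiewicz presentation of `H^*(M(P,λ); ℤ₂)` -/

/-- The Davis–Januszkiewicz ideal: the Stanley–Reisner relations together with the linear
relations determined by `λ`. -/
def CharPair.djIdeal (c : CharPair n) : Ideal (MvPolynomial (↥c.facets) (ZMod 2)) :=
  haveI := c.facetsFinite.fintype
  Ideal.span
    ({q | ∃ S : Finset ↥c.facets, (⋂ F ∈ S, (F : Set c.P)) = ∅ ∧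
        q = ∏ F ∈ S, MvPolynomial.X F} ∪
      Set.range (fun i : Fin n =>
        ∑ F : ↥c.facets, MvPolynomial.C (c.lambda F i) * MvPolynomial.X F))

/-- The mod 2 cohomology ring of `M(P,λ)` in its Davis–Januszkiewicz presentation. -/
def CharPair.cohRing (c : CharPair n) : Type :=
  MvPolynomial (↥c.facets) (ZMod 2) ⧸ c.djIdeal

instance (c : CharPair n) : CommRing c.cohRing :=
  inferInstanceAs (CommRing (MvPolynomial (↥c.facets) (ZMod 2) ⧸ c.djIdeal))

instance (c : CharPair n) : Algebra (ZMod 2) c.cohRing :=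
  inferInstanceAs (Algebra (ZMod 2) (MvPolynomial (↥c.facets) (ZMod 2) ⧸ c.djIdeal))

/-- The ideal of positive-degree elements of `H^*(M(P,λ); ℤ₂)` (generated by the
degree-one classes dual to the characteristic submanifolds). -/
def CharPair.cohPos (c : CharPair n) : Ideal c.cohRing :=
  Ideal.span (Set.range fun F : ↥c.facets =>
    (Ideal.Quotient.mk c.djIdeal (MvPolynomial.X F) : c.cohRing))

/-- The mod 2 cup-length of `M(P,λ)`. -/
def CharPair.cl (c : CharPair n) : ℕ := clIdeal c.cohPos

/-- The mod 2 zero-divisors-cup-length of `M(P,λ)`. -/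
def CharPair.zcl (c : CharPair n) : ℕ := zclRing c.cohRing

/-! ### Dold manifolds of real torus type -/

/-- The Dold manifold of real torus type
`D(M; p₁,…,p_r) = (M × S^{p₁} × ⋯ × S^{p_r}) / ((y,x) ∼ (τ y, -x))`. -/
def DoldSpace {M : Type} [TopologicalSpace M] (τ : M → M) {r : ℕ} (p : Fin r → ℕ) : Type :=
  Quot (fun a b : M × (Π i : Fin r, ↥(Metric.sphere (0 : EuclideanSpace ℝ (Fin (p i + 1))) 1)) =>
    b.1 = τ a.1 ∧ ∀ i, (b.2 i : EuclideanSpace ℝ (Fin (p i + 1))) =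
      -(a.2 i : EuclideanSpace ℝ (Fin (p i + 1))))

instance {M : Type} [TopologicalSpace M] (τ : M → M) {r : ℕ} (p : Fin r → ℕ) :
    TopologicalSpace (DoldSpace τ p) := by
  unfold DoldSpace; infer_instance

/-!
Following the description of a generalized real Bott manifold as an iterated bundle of
projective spaces, adjoin to `ℤ₂` successively a root `y_j` of the monic polynomial of degree
`n_j + 1` that `Γ_j` becomes once `y_ℓ` for `ℓ < j` are fixed. Each step is a free extension with
basis `1, y_j, …, y_j ^ n_j`, so all `Γ_j` vanish in the final algebra while
`y_1 ^ n_1 ⋯ y_m ^ n_m` does not. Evaluation at these roots thus factors through the Bott ring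
and detects the monomial; each `y_j ^ n_j` divides it.
-/

open Polynomial

section BottTower

variable {m : ℕ} (nd : Fin m → ℕ) (β : Fin m → Fin m → ℕ → ZMod 2)
  {A B : Type*} [CommRing A] [Algebra (ZMod 2) A] [CommRing B] [Algebra (ZMod 2) B]

/-- The polynomial `X ∏_{k < n_j} (X + Σ_{ℓ<j} β^j_{ℓk} a_ℓ)`, so that `Γ_j` is this
polynomial in `y_j` once `a_ℓ = y_ℓ` for `ℓ < j`. -/
def bottPoly (a : Fin m → A) (j : Fin m) : A[X] :=
  X * ∏ k ∈ Finset.range (nd j),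
    (X + C (∑ ℓ ∈ Finset.univ.filter (· < j), β j ℓ k • a ℓ))

theorem bottPoly_monic (a : Fin m → A) (j : Fin m) : (bottPoly nd β a j).Monic :=
  monic_X.mul (monic_prod_of_monic _ _ fun _ _ => monic_X_add_C _)

theorem natDegree_bottPoly [Nontrivial A] (a : Fin m → A) (j : Fin m) :
    (bottPoly nd β a j).natDegree = nd j + 1 := by
  rw [bottPoly, monic_X.natDegree_mul (monic_prod_of_monic _ _ fun _ _ => monic_X_add_C _),
    natDegree_prod_of_monic _ _ fun _ _ => monic_X_add_C _]
  simp only [natDegree_X, natDegree_X_add_C, Finset.sum_const, Finset.card_range, smul_eq_mul,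
    mul_one]
  omega

theorem aeval_bottGamma (a : Fin m → A) (j : Fin m) :
    MvPolynomial.aeval a (BottGamma m nd β j) = (bottPoly nd β a j).eval (a j) := by
  simp [BottGamma, bottPoly, eval_prod, eval_finsetSum, Algebra.smul_def]

theorem bottPoly_congr {a b : Fin m → A} {j : Fin m} (h : ∀ ℓ < j, a ℓ = b ℓ) :
    bottPoly nd β a j = bottPoly nd β b j := by
  unfold bottPoly
  refine congrArg _ (Finset.prod_congr rfl fun k _ => ?_)
  refine congrArg (X + C ·) (Finset.sum_congr rfl fun ℓ hℓ => ?_)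
  rw [h ℓ (Finset.mem_filter.mp hℓ).2]

theorem map_bottPoly (f : A →ₐ[ZMod 2] B) (a : Fin m → A) (j : Fin m) :
    (bottPoly nd β a j).map (f : A →+* B) = bottPoly nd β (f ∘ a) j := by
  simp only [bottPoly, Polynomial.map_mul, Polynomial.map_prod, Polynomial.map_add, map_X,
    Polynomial.map_C]
  simp [map_sum, map_smul]

end BottTower

theorem AdjoinRoot.of_mul_root_pow_ne_zero {R : Type*} [CommRing R] {g : R[X]} (hg : g.Monic)
    {c : R} (hc : c ≠ 0) {d : ℕ} (hd : d < g.natDegree) :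
    AdjoinRoot.of g c * AdjoinRoot.root g ^ d ≠ 0 := by
  have hmono : C c * X ^ d ≠ 0 := by
    rwa [C_mul_X_pow_eq_monomial, Ne, monomial_eq_zero_iff]
  have h := AdjoinRoot.mk_ne_zero_of_natDegree_lt hg hmono
    (by rwa [natDegree_C_mul_X_pow d c hc])
  simpa only [map_mul, map_pow, AdjoinRoot.mk_C, AdjoinRoot.mk_X] using h

section BottModel

variable {m : ℕ} (nd : Fin m → ℕ) (β : Fin m → Fin m → ℕ → ZMod 2)
  {A : Type*} [CommRing A] [Algebra (ZMod 2) A]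

def IsBottModel (M : ℕ) (a : Fin m → A) : Prop :=
  (∀ j : Fin m, ↑j < M → MvPolynomial.aeval a (BottGamma m nd β j) = 0) ∧
    ∏ j ∈ Finset.univ.filter (fun j : Fin m => ↑j < M), a j ^ nd j ≠ 0

theorem aeval_bottGamma_congr {a b : Fin m → A} {j : Fin m} (h : ∀ ℓ ≤ j, a ℓ = b ℓ) :
    MvPolynomial.aeval a (BottGamma m nd β j) = MvPolynomial.aeval b (BottGamma m nd β j) := by
  rw [aeval_bottGamma, aeval_bottGamma, h j le_rfl,
    bottPoly_congr nd β fun ℓ hℓ => h ℓ hℓ.le]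

/-- The monomial picks up the factor `root ^ n_J`, below the degree `n_J + 1` of the monic
polynomial adjoined, hence stays nonzero. -/
theorem IsBottModel.adjoinRoot {M : ℕ} (hM : M < m) {a : Fin m → A} (ha : IsBottModel nd β M a) :
    IsBottModel nd β (M + 1) (Function.update (AdjoinRoot.of (bottPoly nd β a ⟨M, hM⟩) ∘ a)
      ⟨M, hM⟩ (AdjoinRoot.root (bottPoly nd β a ⟨M, hM⟩))) := by
  set J : Fin m := ⟨M, hM⟩
  set g := bottPoly nd β a J
  set ι := IsScalarTower.toAlgHom (ZMod 2) A (AdjoinRoot g)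
  set b := Function.update (AdjoinRoot.of g ∘ a) J (AdjoinRoot.root g)
  have hb : ∀ ℓ ≠ J, b ℓ = ι (a ℓ) := fun ℓ hℓ => Function.update_of_ne hℓ _ _
  have hbJ : b J = AdjoinRoot.root g := Function.update_self _ _ _
  have hlt : ∀ {j : Fin m}, ↑j < M → j ≠ J := fun hj h => by simp [h, J] at hj
  refine ⟨fun j hj => ?_, ?_⟩
  · rcases Nat.lt_succ_iff_lt_or_eq.mp hj with hj | hj
    · rw [aeval_bottGamma_congr nd β (b := fun ℓ => ι (a ℓ))
          fun ℓ hℓ => hb ℓ (hlt ((Fin.le_iff_val_le_val.mp hℓ).trans_lt hj)),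
        ← MvPolynomial.comp_aeval_apply, ha.1 j hj, map_zero]
    · obtain rfl : j = J := Fin.ext hj
      rw [aeval_bottGamma, hbJ,
        bottPoly_congr nd β (b := ι ∘ a) fun ℓ hℓ => hb ℓ hℓ.ne, ← map_bottPoly, eval_map]
      exact AdjoinRoot.eval₂_root g
  · have hfilter : Finset.univ.filter (fun j : Fin m => ↑j < M + 1) =
        insert J (Finset.univ.filter (fun j : Fin m => ↑j < M)) := by
      ext j
      simp [J, Fin.ext_iff]
      omega
    have hprod : ∏ j ∈ Finset.univ.filter (fun j : Fin m => ↑j < M), b j ^ nd j =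
        AdjoinRoot.of g (∏ j ∈ Finset.univ.filter (fun j : Fin m => ↑j < M), a j ^ nd j) := by
      rw [map_prod]
      exact Finset.prod_congr rfl fun j hj =>
        by rw [hb j (hlt (Finset.mem_filter.mp hj).2), map_pow]; rfl
    have : Nontrivial A := nontrivial_of_ne _ _ ha.2
    rw [hfilter, Finset.prod_insert (by simp [J]), hprod, hbJ, mul_comm]
    exact AdjoinRoot.of_mul_root_pow_ne_zero (bottPoly_monic nd β a J) ha.2
      (by rw [natDegree_bottPoly]; omega)

theorem exists_isBottModel {M : ℕ} (hM : M ≤ m) :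
    ∃ (A : Type) (_ : CommRing A) (_ : Algebra (ZMod 2) A) (a : Fin m → A),
      IsBottModel nd β M a := by
  induction M with
  | zero => exact ⟨ZMod 2, inferInstance, inferInstance, 0, by simp [IsBottModel]⟩
  | succ M ih =>
    obtain ⟨A, _, _, a, ha⟩ := ih (by omega)
    exact ⟨_, _, _, _, ha.adjoinRoot nd β (by omega)⟩

theorem IsBottModel.prod_bottY_pow_ne_zero {a : Fin m → A} (ha : IsBottModel nd β m a) :
    ∏ j, BottY m nd β j ^ nd j ≠ 0 := by
  have hker : Ideal.span (Set.range (BottGamma m nd β)) ≤ RingHom.ker (MvPolynomial.aeval a) :=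
    Ideal.span_le.mpr (by rintro _ ⟨j, rfl⟩; exact ha.1 j j.isLt)
  let φ : BottRing m nd β →ₐ[ZMod 2] A :=
    Ideal.Quotient.liftₐ _ (MvPolynomial.aeval a) fun _ hp => RingHom.mem_ker.mp (hker hp)
  have hφ : ∀ j, φ (BottY m nd β j) = a j := fun j => MvPolynomial.aeval_X a j
  intro h
  apply ha.2
  rw [Finset.filter_true_of_mem fun j _ => j.isLt]
  calc ∏ j, a j ^ nd j = φ (∏ j, BottY m nd β j ^ nd j) := by simp only [map_prod, map_pow, hφ]
    _ = 0 := by rw [h, map_zero]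

end BottModel

theorem stmt3_general (m : ℕ) (nd : Fin m → ℕ)
    (β : Fin m → Fin m → ℕ → ZMod 2) :
    (∀ j : Fin m, (BottY m nd β j) ^ (nd j) ≠ 0) ∧
    (∏ j : Fin m, (BottY m nd β j) ^ (nd j)) ≠ 0 := by
  obtain ⟨A, _, _, a, ha⟩ := exists_isBottModel nd β le_rfl
  have hprod := ha.prod_bottY_pow_ne_zero
  exact ⟨fun j => ne_zero_of_dvd_ne_zero hprod (Finset.dvd_prod_of_mem _ (Finset.mem_univ j)),
    hprod⟩

theorem stmt3 (m : ℕ) (nd : Fin m → ℕ) (hnd : ∀ j, 0 < nd j)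
    (β : Fin m → Fin m → ℕ → ZMod 2) :
    (∀ j : Fin m, (BottY m nd β j) ^ (nd j) ≠ 0) ∧
    (∏ j : Fin m, (BottY m nd β j) ^ (nd j)) ≠ 0 :=
  stmt3_general m nd β

end
end

section
/- In the quotient ring A = Z_2[y_1,…,y_m]/I, where I = ⟨Γ_1,…,Γ_m⟩ with Γ_j = y_j ∏_{k=1}^{n_j} (y_j + Σ_{ℓ<j} β^j_{ℓk} y_ℓ) (coefficients β^j_{ℓk} ∈ Z_2), set a_j = 1⊗y_j − y_j⊗1 ∈ A ⊗_{Z_2} A. If d_j = 2^{r_j} − 1 satisfies n_j ≤ d_j < 2 n_j for each j, then the product a_1^{d_1} a_2^{d_2} ⋯ a_m^{d_m} is nonzero in A ⊗_{Z_2} A, and each a_j lies in the kernel of the multiplication map A ⊗ A → A. -/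
open Set unitInterval
open scoped TensorProduct

noncomputable section

variable {n : ℕ}

/-!
Write `R` for the ring of the first `m` generators and `n = n_{m+1}`, `D = d_{m+1}`. The ring of
all `m + 1` generators maps to `R[x]/(g)` with `g = x ∏ₖ (x + cₖ)` monic of degree `n + 1`, which is
free over `R` on `1, x, …, xⁿ`. In characteristic 2 the last factor `a_{m+1}^D` becomes
`(x ⊗ 1 + 1 ⊗ x)^D = ∑ₖ C(D, k) xᵏ ⊗ x^(D-k)`, and since `n ≤ D ≤ 2n` the functional
"coefficient of `x^(D-n)`" ⊗ "coefficient of `xⁿ`" sees only the term `k = D - n`, with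
coefficient `C(D, n)`, which is odd for `D = 2^r - 1`. So a pair of functionals detecting the
product for `m` generators extends to one detecting it for `m + 1`, and by induction the
product is nonzero.
-/

theorem ZMod.natCast_choose_two_pow_sub_one {r i : ℕ} (hi : i < 2 ^ r) :
    ((2 ^ r - 1).choose i : ZMod 2) = 1 := by
  induction i with
  | zero => simp
  | succ i ih =>
    have hpascal := Nat.choose_succ_succ (2 ^ r - 1) i
    rw [Nat.succ_eq_add_one, Nat.sub_add_cancel Nat.one_le_two_pow] at hpascal
    have heven : ((2 ^ r).choose (i + 1) : ZMod 2) = 0 :=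
      (ZMod.natCast_eq_zero_iff _ _).2 (Nat.prime_two.dvd_choose_pow i.succ_ne_zero hi.ne)
    rw [hpascal, Nat.cast_add, ih (by omega)] at heven
    exact (neg_eq_of_add_eq_zero_right heven).symm.trans (ZMod.neg_eq_self_mod_two 1)

namespace TensorProduct

variable {K M N : Type*} [CommRing K] [AddCommGroup M] [Module K M] [AddCommGroup N] [Module K N]

def pairing (φ : M →ₗ[K] K) (ψ : N →ₗ[K] K) : M ⊗[K] N →ₗ[K] K :=
  LinearMap.mul' K K ∘ₗ TensorProduct.map φ ψ

@[simp]
theorem pairing_tmul (φ : M →ₗ[K] K) (ψ : N →ₗ[K] K) (x : M) (y : N) :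
    pairing φ ψ (x ⊗ₜ y) = φ x * ψ y := rfl

theorem pairing_comp_map {M' N' : Type*} [AddCommGroup M'] [Module K M']
    [AddCommGroup N'] [Module K N'] (φ : M' →ₗ[K] K) (ψ : N' →ₗ[K] K) (f : M →ₗ[K] M')
    (g : N →ₗ[K] N') (x : M ⊗[K] N) :
    pairing (φ ∘ₗ f) (ψ ∘ₗ g) x = pairing φ ψ (map f g x) := by
  rw [pairing, pairing, map_comp]
  rfl

end TensorProduct

section

open Polynomial

namespace AdjoinRoot

variable {R : Type*} [CommRing R] {g : R[X]}

def coeff (hg : g.Monic) (t : ℕ) : AdjoinRoot g →ₗ[R] R :=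
  lcoeff R t ∘ₗ modByMonicHom hg

theorem coeff_of_mul_root_pow (hg : g.Monic) (t : ℕ) (a : R) {i : ℕ} (hi : i < g.natDegree) :
    coeff hg t (of g a * root g ^ i) = if t = i then a else 0 := by
  nontriviality R
  have hmk : of g a * root g ^ i = mk g (C a * X ^ i) := by
    rw [map_mul, map_pow, mk_C, mk_X]
  have hdeg : (C a * X ^ i).degree < g.degree :=
    degree_lt_degree ((natDegree_C_mul_X_pow_le a i).trans_lt hi)
  rw [hmk, coeff, LinearMap.comp_apply, modByMonicHom_mk, (modByMonic_eq_self_iff hg).2 hdeg,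
    lcoeff_apply, coeff_C_mul_X_pow]

variable {K : Type*} [CommRing K] [Algebra K R]

open TensorProduct in
theorem pairing_coeff_map_mul_add_pow (hg : g.Monic) {n D : ℕ} (hdeg : g.natDegree = n + 1)
    (hnD : n ≤ D) (hD : D ≤ 2 * n) (φ ψ : R →ₗ[K] K) (z : R ⊗[K] R) :
    pairing (φ ∘ₗ (coeff hg (D - n)).restrictScalars K) (ψ ∘ₗ (coeff hg n).restrictScalars K)
      (Algebra.TensorProduct.map (IsScalarTower.toAlgHom K R (AdjoinRoot g))
          (IsScalarTower.toAlgHom K R (AdjoinRoot g)) z *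
        (root g ⊗ₜ 1 + 1 ⊗ₜ root g) ^ D) = D.choose n * pairing φ ψ z := by
  induction z using TensorProduct.induction_on with
  | zero => simp
  | add x y hx hy => rw [map_add, add_mul, map_add, hx, hy, map_add, mul_add]
  | tmul a b =>
    have hterm (k : ℕ) : (of g a ⊗ₜ[K] of g b) * ((root g ⊗ₜ 1) ^ k * (1 ⊗ₜ root g) ^ (D - k)) =
        (of g a * root g ^ k) ⊗ₜ (of g b * root g ^ (D - k)) := by
      simp only [Algebra.TensorProduct.tmul_pow, Algebra.TensorProduct.tmul_mul_tmul, one_pow,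
        mul_one, one_mul]
    have hvanish (k : ℕ) (hk : k ≤ D) (hne : k ≠ D - n) :
        φ (coeff hg (D - n) (of g a * root g ^ k)) * ψ (coeff hg n (of g b * root g ^ (D - k)))
          = 0 := by
      rcases hne.lt_or_gt with hlt | hgt
      · rw [coeff_of_mul_root_pow hg _ a (i := k) (by omega), if_neg (by omega), map_zero, zero_mul]
      · rw [coeff_of_mul_root_pow hg _ b (i := D - k) (by omega), if_neg (by omega), map_zero,
          mul_zero]
    simp only [Algebra.TensorProduct.map_tmul, IsScalarTower.coe_toAlgHom', algebraMap_eq,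
      add_pow, Finset.mul_sum, ← mul_assoc, hterm, map_sum]
    simp only [mul_comm _ ((D.choose _ : ℕ) : AdjoinRoot g ⊗[K] AdjoinRoot g), ← nsmul_eq_mul,
      map_nsmul, pairing_tmul, LinearMap.comp_apply, LinearMap.restrictScalars_apply]
    rw [Finset.sum_eq_single_of_mem (D - n) (by simp only [Finset.mem_range]; omega)
      (fun k hk hne => by rw [hvanish k (by simpa [Nat.lt_succ_iff] using hk) hne, smul_zero]),
      Nat.sub_sub_self hnD, coeff_of_mul_root_pow hg _ a (by omega), if_pos rfl,
      coeff_of_mul_root_pow hg _ b (by omega), if_pos rfl, Nat.choose_symm hnD,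
      nsmul_eq_mul]

end AdjoinRoot

end

namespace BottRing

open MvPolynomial in
theorem aeval_BottY_BottGamma {m : ℕ} {nd : Fin m → ℕ} {β : Fin m → Fin m → ℕ → ZMod 2}
    (j : Fin m) : aeval (BottY m nd β) (BottGamma m nd β j) = 0 := by
  rw [show BottY m nd β = fun i => Ideal.Quotient.mkₐ (ZMod 2) _ (X i) from rfl,
    ← comp_aeval_apply, aeval_X_left_apply, Ideal.Quotient.mkₐ_eq_mk,
    Ideal.Quotient.eq_zero_iff_mem]
  exact Ideal.subset_span ⟨j, rfl⟩

section Lift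

open MvPolynomial

variable {m : ℕ} {T : Type*} [CommRing T] [Algebra (ZMod 2) T]

section

variable {nd : Fin m → ℕ} {β : Fin m → Fin m → ℕ → ZMod 2}

def lift (v : Fin m → T) (hv : ∀ j, aeval v (BottGamma m nd β j) = 0) :
    BottRing m nd β →ₐ[ZMod 2] T :=
  Ideal.Quotient.liftₐ _ (aeval v) fun _ hp => RingHom.mem_ker.1 <|
    Ideal.span_le.2 (Set.range_subset_iff.2 fun j => RingHom.mem_ker.2 (hv j)) hp

@[simp]
theorem lift_BottY (v : Fin m → T) (hv : ∀ j, aeval v (BottGamma m nd β j) = 0) (j : Fin m) :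
    lift v hv (BottY m nd β j) = v j :=
  aeval_X v j

def augmentation : BottRing m nd β →ₐ[ZMod 2] ZMod 2 :=
  lift 0 fun j => by simp [BottGamma]

instance : Nontrivial (BottRing m nd β) :=
  augmentation.toRingHom.domain_nontrivial

end

variable {nd : Fin (m + 1) → ℕ} {β : Fin (m + 1) → Fin (m + 1) → ℕ → ZMod 2}

theorem aeval_BottGamma_castSucc (v : Fin (m + 1) → T) (j : Fin m) :
    aeval v (BottGamma (m + 1) nd β j.castSucc) =
      aeval (Fin.init v)
        (BottGamma m (Fin.init nd) (fun j ℓ k => β j.castSucc ℓ.castSucc k) j) := by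
  simp [BottGamma, Finset.sum_filter, Fin.sum_univ_castSucc, Fin.init, apply_ite,
    (Fin.castSucc_lt_last j).not_gt]

theorem aeval_BottGamma_last (v : Fin (m + 1) → T) :
    aeval v (BottGamma (m + 1) nd β (Fin.last m)) = v (Fin.last m) *
      ∏ k ∈ Finset.range (nd (Fin.last m)),
        (v (Fin.last m) + ∑ ℓ : Fin m, β (Fin.last m) ℓ.castSucc k • v ℓ.castSucc) := by
  simp [BottGamma, Finset.sum_filter, Fin.sum_univ_castSucc, Algebra.smul_def]

end Lift

section Succ

open Polynomial

variable {m : ℕ} (nd : Fin (m + 1) → ℕ) (β : Fin (m + 1) → Fin (m + 1) → ℕ → ZMod 2)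

abbrev Init : Type := BottRing m (Fin.init nd) (fun j ℓ k => β j.castSucc ℓ.castSucc k)

/-- `Γ_{m+1}` as a polynomial in `y_{m+1}` over the ring of the first `m` generators. -/
def lastRelation : (Init nd β)[X] :=
  X * ∏ k ∈ Finset.range (nd (Fin.last m)),
    (X + C (∑ ℓ : Fin m, β (Fin.last m) ℓ.castSucc k • (BottY _ _ _ ℓ : Init nd β)))

theorem lastRelation_monic : (lastRelation nd β).Monic :=
  monic_X.mul (monic_prod_of_monic _ _ fun _ _ => monic_X_add_C _)

theorem natDegree_lastRelation : (lastRelation nd β).natDegree = nd (Fin.last m) + 1 := by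
  rw [lastRelation, (monic_X).natDegree_mul (monic_prod_of_monic _ _ fun _ _ => monic_X_add_C _),
    natDegree_prod_of_monic _ _ fun _ _ => monic_X_add_C _]
  simp only [natDegree_X, natDegree_X_add_C, Finset.sum_const, Finset.card_range, smul_eq_mul,
    mul_one, add_comm]

theorem aeval_lastRelation {S : Type*} [CommRing S] [Algebra (ZMod 2) S] [Algebra (Init nd β) S]
    [IsScalarTower (ZMod 2) (Init nd β) S] (x : S) :
    aeval x (lastRelation nd β) = x * ∏ k ∈ Finset.range (nd (Fin.last m)),
      (x + ∑ ℓ : Fin m,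
        β (Fin.last m) ℓ.castSucc k • algebraMap (Init nd β) S (BottY _ _ _ ℓ)) := by
  simp only [lastRelation, map_mul, map_prod, map_add, aeval_X, aeval_C, map_sum]
  simp only [← IsScalarTower.coe_toAlgHom' (ZMod 2) (Init nd β) S, map_smul]

def toAdjoinRoot : BottRing (m + 1) nd β →ₐ[ZMod 2] AdjoinRoot (lastRelation nd β) :=
  lift (Fin.snoc (fun j => IsScalarTower.toAlgHom (ZMod 2) (Init nd β) _ (BottY _ _ _ j))
    (AdjoinRoot.root _)) fun j => by
    induction j using Fin.lastCases with
    | last =>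
      simp only [aeval_BottGamma_last, Fin.snoc_last, Fin.snoc_castSucc,
        IsScalarTower.coe_toAlgHom']
      rw [← aeval_lastRelation, AdjoinRoot.aeval_eq, AdjoinRoot.mk_self]
    | cast j =>
      rw [aeval_BottGamma_castSucc, Fin.init_snoc, ← MvPolynomial.comp_aeval_apply,
        aeval_BottY_BottGamma, map_zero]

@[simp]
theorem toAdjoinRoot_BottY_castSucc (j : Fin m) :
    toAdjoinRoot nd β (BottY (m + 1) nd β j.castSucc) =
      algebraMap (Init nd β) _ (BottY _ _ _ j) := by
  simp [toAdjoinRoot]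

@[simp]
theorem toAdjoinRoot_BottY_last :
    toAdjoinRoot nd β (BottY (m + 1) nd β (Fin.last m)) = AdjoinRoot.root _ := by
  simp [toAdjoinRoot]

end Succ

open TensorProduct in
theorem exists_pairing_prod_eq_one (m : ℕ) (nd : Fin m → ℕ) (β : Fin m → Fin m → ℕ → ZMod 2)
    (d : Fin m → ℕ) (hle : ∀ j, nd j ≤ d j) (hle_two_mul : ∀ j, d j ≤ 2 * nd j)
    (hodd : ∀ j, ((d j).choose (nd j) : ZMod 2) = 1) :
    ∃ φ ψ : BottRing m nd β →ₗ[ZMod 2] ZMod 2,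
      pairing φ ψ (∏ j, (BottY m nd β j ⊗ₜ 1 + 1 ⊗ₜ BottY m nd β j) ^ d j) = 1 := by
  induction m with
  | zero =>
    exact ⟨augmentation.toLinearMap, augmentation.toLinearMap,
      by simp [Algebra.TensorProduct.one_def]⟩
  | succ m ih =>
    obtain ⟨φ, ψ, h⟩ := ih (Fin.init nd) _ (Fin.init d) (fun j => hle _) (fun j => hle_two_mul _)
      (fun j => hodd _)
    have hg := lastRelation_monic nd β
    set θ := toAdjoinRoot nd β
    set ι := IsScalarTower.toAlgHom (ZMod 2) (Init nd β) (AdjoinRoot (lastRelation nd β))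
    have hmap : Algebra.TensorProduct.map θ θ
        (∏ j, (BottY (m + 1) nd β j ⊗ₜ 1 + 1 ⊗ₜ BottY (m + 1) nd β j) ^ d j) =
        Algebra.TensorProduct.map ι ι (∏ j : Fin m, (BottY _ _ _ j ⊗ₜ 1 + 1 ⊗ₜ BottY _ _ _ j :
          Init nd β ⊗[ZMod 2] Init nd β) ^ d j.castSucc) *
        (AdjoinRoot.root _ ⊗ₜ 1 + 1 ⊗ₜ AdjoinRoot.root _) ^ d (Fin.last m) := by
      simp [θ, ι, Fin.prod_univ_castSucc, map_prod, Algebra.TensorProduct.map_tmul]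
    refine ⟨(φ ∘ₗ (AdjoinRoot.coeff hg (d (Fin.last m) - nd (Fin.last m))).restrictScalars _) ∘ₗ
      θ.toLinearMap, (ψ ∘ₗ (AdjoinRoot.coeff hg (nd (Fin.last m))).restrictScalars _) ∘ₗ
      θ.toLinearMap, ?_⟩
    rw [pairing_comp_map]
    change pairing _ _ (Algebra.TensorProduct.map θ θ _) = 1
    rw [hmap,
      AdjoinRoot.pairing_coeff_map_mul_add_pow hg (natDegree_lastRelation nd β) (hle _)
        (hle_two_mul _),
      hodd, one_mul]
    exact h

end BottRing

open TensorProduct in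
theorem stmt5_general (m : ℕ) (nd : Fin m → ℕ)
    (β : Fin m → Fin m → ℕ → ZMod 2) (r : Fin m → ℕ)
    (h : ∀ j, nd j ≤ 2 ^ r j - 1 ∧ 2 ^ r j - 1 < 2 * nd j) :
    (∀ j, LinearMap.mul' (ZMod 2) (BottRing m nd β)
      ((1 : BottRing m nd β) ⊗ₜ[ZMod 2] BottY m nd β j -
        BottY m nd β j ⊗ₜ[ZMod 2] (1 : BottRing m nd β)) = 0) ∧
    (∏ j, ((1 : BottRing m nd β) ⊗ₜ[ZMod 2] BottY m nd β j -
      BottY m nd β j ⊗ₜ[ZMod 2] (1 : BottRing m nd β)) ^ (2 ^ r j - 1)) ≠ 0 := by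
  refine ⟨fun j => by simp, fun hzero => ?_⟩
  obtain ⟨φ, ψ, hpair⟩ := BottRing.exists_pairing_prod_eq_one m nd β (fun j => 2 ^ r j - 1)
    (fun j => (h j).1) (fun j => (h j).2.le)
    fun j => ZMod.natCast_choose_two_pow_sub_one (Nat.lt_of_le_sub_one (Nat.two_pow_pos _) (h j).1)
  simp only [ZModModule.sub_eq_add,
    add_comm (1 ⊗ₜ[ZMod 2] _ : BottRing m nd β ⊗[ZMod 2] BottRing m nd β)] at hzero
  rw [hzero, map_zero] at hpair
  exact zero_ne_one hpair

theorem stmt5 (m : ℕ) (nd : Fin m → ℕ) (hnd : ∀ j, 0 < nd j)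
    (β : Fin m → Fin m → ℕ → ZMod 2) (r : Fin m → ℕ)
    (h : ∀ j, nd j ≤ 2 ^ r j - 1 ∧ 2 ^ r j - 1 < 2 * nd j) :
    (∀ j, LinearMap.mul' (ZMod 2) (BottRing m nd β)
      ((1 : BottRing m nd β) ⊗ₜ[ZMod 2] BottY m nd β j -
        BottY m nd β j ⊗ₜ[ZMod 2] (1 : BottRing m nd β)) = 0) ∧
    (∏ j, ((1 : BottRing m nd β) ⊗ₜ[ZMod 2] BottY m nd β j -
      BottY m nd β j ⊗ₜ[ZMod 2] (1 : BottRing m nd β)) ^ (2 ^ r j - 1)) ≠ 0 :=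
  stmt5_general m nd β r h

end
end
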